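/- Let δ_L < δ_U be real numbers, let Λ > 0 and z ∈ ℝ, and set δ = δ_U (the upper boundary). Define τ : (0,∞) → ℝ by τ(c) = Φ(−z) − Φ(√(c/Λ)·(δ_L − δ_U) − z). Then τ(c) converges to Φ(−z) as c → ∞, and the derivative of the map c ↦ logit(τ(c)) converges to 0 as c → ∞. -/

import Mathlib

open Filter Set
open MeasureTheory

/-- The standard normal cumulative distribution function. -/
noncomputable def Phi (x : ℝ) : ℝ :=
  (2 * Real.pi) ^ (-(1 : ℝ) / 2) * ∫ t in Set.Iic x, Real.exp (-t ^ 2 / 2)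

/-- The logit function, `logit x = log x - log (1 - x)`. -/
noncomputable def logit (x : ℝ) : ℝ := Real.log x - Real.log (1 - x)

lemma gauss_int : Integrable (fun t : ℝ => Real.exp (-t ^ 2 / 2)) := by
  have h := integrable_exp_neg_mul_sq (show (0:ℝ) < 1/2 by norm_num)
  convert h using 2 with t
  ring_nf

lemma gauss_cont : Continuous (fun t : ℝ => Real.exp (-t ^ 2 / 2)) := by
  continuity

lemma gauss_pos (t : ℝ) : 0 < Real.exp (-t ^ 2 / 2) := Real.exp_pos _

lemma norm_const_pos : 0 < (2 * Real.pi) ^ (-(1 : ℝ) / 2) :=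
  Real.rpow_pos_of_pos (by positivity) _

lemma Phi_sub_Phi (x y : ℝ) :
    Phi y - Phi x = (2 * Real.pi) ^ (-(1 : ℝ) / 2) * ∫ t in x..y, Real.exp (-t ^ 2 / 2) := by
  unfold Phi
  rw [← mul_sub, intervalIntegral.integral_Iic_sub_Iic gauss_int.integrableOn gauss_int.integrableOn]

lemma Phi_strictMono : StrictMono Phi := by
  intro x y hxy
  have h : Phi y - Phi x > 0 := by
    rw [Phi_sub_Phi]
    exact mul_pos norm_const_pos
      (intervalIntegral.intervalIntegral_pos_of_pos gauss_int.intervalIntegrable gauss_pos hxy)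
  linarith

lemma hasDerivAt_Phi (x : ℝ) :
    HasDerivAt Phi ((2 * Real.pi) ^ (-(1 : ℝ) / 2) * Real.exp (-x ^ 2 / 2)) x := by
  have heq : ∀ y : ℝ, Phi y = Phi 0 + (2 * Real.pi) ^ (-(1 : ℝ) / 2) *
      ∫ t in (0:ℝ)..y, Real.exp (-t ^ 2 / 2) := by
    intro y
    have := Phi_sub_Phi 0 y
    linarith
  have hFTC : HasDerivAt (fun y : ℝ => ∫ t in (0:ℝ)..y, Real.exp (-t ^ 2 / 2))
      (Real.exp (-x ^ 2 / 2)) x :=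
    intervalIntegral.integral_hasDerivAt_right gauss_int.intervalIntegrable
      gauss_cont.stronglyMeasurable.stronglyMeasurableAtFilter gauss_cont.continuousAt
  have := (hFTC.const_mul ((2 * Real.pi) ^ (-(1 : ℝ) / 2))).const_add (Phi 0)
  refine HasDerivAt.congr_of_eventuallyEq this ?_
  filter_upwards with y using (heq y)

lemma Phi_tendsto_zero : Tendsto Phi atBot (nhds 0) := by
  have h : Tendsto (fun x : ℝ => ∫ t in Set.Iic x, Real.exp (-t ^ 2 / 2)) atBot (nhds 0) := by
    have := MeasureTheory.tendsto_integral_filter_of_dominated_convergence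
      (μ := (volume : Measure ℝ)) (l := atBot) (f := fun _ : ℝ => (0:ℝ))
      (F := fun x t => (Set.Iic x).indicator (fun t => Real.exp (-t ^ 2 / 2)) t)
      (fun t => Real.exp (-t ^ 2 / 2))
      (by
        filter_upwards with x
        exact (gauss_cont.aestronglyMeasurable).indicator measurableSet_Iic)
      (by
        filter_upwards with x
        filter_upwards with t
        rw [Real.norm_eq_abs, abs_of_nonneg (Set.indicator_nonneg (fun s _ => (gauss_pos s).le) t)]
        exact Set.indicator_le_self' (fun s _ => (gauss_pos s).le) t)
      gauss_int
      (by
        filter_upwards with t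
        refine tendsto_const_nhds.congr' ?_
        filter_upwards [eventually_lt_atBot t] with x hx
        exact (Set.indicator_of_notMem (by simpa using hx.not_ge) _).symm)
    simpa [MeasureTheory.integral_indicator measurableSet_Iic] using this
  have := h.const_mul ((2 * Real.pi) ^ (-(1 : ℝ) / 2))
  rw [mul_zero] at this
  exact this

lemma Phi_pos (x : ℝ) : 0 < Phi x := by
  have h1 : Phi (x - 1) < Phi x := Phi_strictMono (by linarith)
  have h0 : 0 ≤ Phi (x - 1) := by
    unfold Phi
    exact mul_nonneg norm_const_pos.le (setIntegral_nonneg measurableSet_Iic fun t _ => (gauss_pos t).le)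
  linarith

lemma Phi_lt_one (x : ℝ) : Phi x < 1 := by
  have htot : (2 * Real.pi) ^ (-(1 : ℝ) / 2) * ∫ t : ℝ, Real.exp (-t ^ 2 / 2) = 1 := by
    have hg : ∫ t : ℝ, Real.exp (-t ^ 2 / 2) = Real.sqrt (2 * Real.pi) := by
      have := integral_gaussian (1/2)
      rw [show Real.pi / (1/2) = 2 * Real.pi by ring] at this
      rw [← this]
      congr 1 with t
      ring_nf
    rw [hg, Real.sqrt_eq_rpow, ← Real.rpow_add (by positivity)]
    norm_num
  have hsplit : (∫ t in Set.Iic x, Real.exp (-t ^ 2 / 2)) +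
      (∫ t in Set.Ioi x, Real.exp (-t ^ 2 / 2)) = ∫ t : ℝ, Real.exp (-t ^ 2 / 2) :=
    intervalIntegral.integral_Iic_add_Ioi gauss_int.integrableOn gauss_int.integrableOn
  have hIoi : 0 < ∫ t in Set.Ioi x, Real.exp (-t ^ 2 / 2) := by
    have hle : ∫ t in Set.Ioc x (x+1), Real.exp (-t ^ 2 / 2) ≤
        ∫ t in Set.Ioi x, Real.exp (-t ^ 2 / 2) := by
      apply setIntegral_mono_set gauss_int.integrableOn
      · filter_upwards with t using (gauss_pos t).le
      · exact HasSubset.Subset.eventuallyLE Set.Ioc_subset_Ioi_self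
    have hpos : 0 < ∫ t in Set.Ioc x (x+1), Real.exp (-t ^ 2 / 2) := by
      rw [← intervalIntegral.integral_of_le (by linarith)]
      exact intervalIntegral.intervalIntegral_pos_of_pos gauss_int.intervalIntegrable
        gauss_pos (by linarith)
    linarith
  calc Phi x = (2 * Real.pi) ^ (-(1 : ℝ) / 2) * ∫ t in Set.Iic x, Real.exp (-t ^ 2 / 2) := rfl
    _ < (2 * Real.pi) ^ (-(1 : ℝ) / 2) * ∫ t : ℝ, Real.exp (-t ^ 2 / 2) := by
        apply mul_lt_mul_of_pos_left _ norm_const_pos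
        linarith
    _ = 1 := htot

lemma sqrt_tendsto_atTop : Tendsto Real.sqrt atTop atTop := by
  apply tendsto_atTop_atTop.2
  intro b
  refine ⟨max 0 b ^ 2, fun x hx => le_trans (le_max_right 0 b) ?_⟩
  rw [← Real.sqrt_sq (le_max_left 0 b)]
  exact Real.sqrt_le_sqrt hx

theorem limiting_behavior_boundary_upper
    (δL δU Λ z : ℝ) (hLU : δL < δU) (hΛ : 0 < Λ) :
    Tendsto
      (fun c : ℝ => Phi (-z) - Phi (Real.sqrt (c / Λ) * (δL - δU) - z))
      atTop (nhds (Phi (-z))) ∧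
    Tendsto
      (deriv (fun c : ℝ => logit
        (Phi (-z) - Phi (Real.sqrt (c / Λ) * (δL - δU) - z))))
      atTop (nhds 0) := by
  have hd : δL - δU < 0 := by linarith
  set a : ℝ → ℝ := fun c => Real.sqrt (c / Λ) * (δL - δU) - z with ha_def
  set τ : ℝ → ℝ := fun c => Phi (-z) - Phi (a c) with hτ_def
  have hs : Tendsto (fun c : ℝ => Real.sqrt (c / Λ)) atTop atTop :=
    sqrt_tendsto_atTop.comp (tendsto_id.atTop_div_const hΛ)
  have ha : Tendsto a atTop atBot := by
    have hmul : Tendsto (fun c : ℝ => Real.sqrt (c / Λ) * (δL - δU)) atTop atBot :=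
      hs.atTop_mul_const_of_neg hd
    simpa [ha_def, sub_eq_add_neg] using tendsto_atBot_add_const_right atTop (-z) hmul
  have hPhia : Tendsto (fun c => Phi (a c)) atTop (nhds 0) := Phi_tendsto_zero.comp ha
  have part1 : Tendsto τ atTop (nhds (Phi (-z))) := by
    simpa using tendsto_const_nhds.sub hPhia
  refine ⟨part1, ?_⟩
  -- bounds on τ for c > 0
  have hτ01 : ∀ c : ℝ, 0 < c → 0 < τ c ∧ τ c < 1 := by
    intro c hc
    have hsq : 0 < Real.sqrt (c / Λ) := Real.sqrt_pos.2 (div_pos hc hΛ)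
    have hlt : a c < -z := by
      have : Real.sqrt (c / Λ) * (δL - δU) < 0 := mul_neg_of_pos_of_neg hsq hd
      simp only [ha_def]
      linarith
    have h1 : Phi (a c) < Phi (-z) := Phi_strictMono hlt
    have h2 : 0 < Phi (a c) := Phi_pos _
    have h3 : Phi (-z) < 1 := Phi_lt_one _
    constructor <;> simp only [hτ_def] <;> linarith
  -- the explicit derivative
  set D : ℝ → ℝ := fun c =>
    (1 / τ c - (-1) / (1 - τ c)) *
      (-(((2 * Real.pi) ^ (-(1 : ℝ) / 2) * Real.exp (-(a c) ^ 2 / 2)) *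
        ((1 / Λ) / (2 * Real.sqrt (c / Λ)) * (δL - δU)))) with hD_def
  have hev : deriv (fun c : ℝ => logit (τ c)) =ᶠ[atTop] D := by
    filter_upwards [eventually_gt_atTop (0 : ℝ)] with c hc
    obtain ⟨hτ0, hτ1⟩ := hτ01 c hc
    have hs' : HasDerivAt (fun c : ℝ => Real.sqrt (c / Λ))
        ((1 / Λ) / (2 * Real.sqrt (c / Λ))) c :=
      ((hasDerivAt_id c).div_const Λ).sqrt (ne_of_gt (div_pos hc hΛ))
    have ha' : HasDerivAt a ((1 / Λ) / (2 * Real.sqrt (c / Λ)) * (δL - δU)) c :=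
      (hs'.mul_const _).sub_const z
    have hΦ' : HasDerivAt (fun c => Phi (a c))
        (((2 * Real.pi) ^ (-(1 : ℝ) / 2) * Real.exp (-(a c) ^ 2 / 2)) *
          ((1 / Λ) / (2 * Real.sqrt (c / Λ)) * (δL - δU))) c := by
      exact (hasDerivAt_Phi (a c)).comp c ha'
    have hτ' : HasDerivAt τ
        (-(((2 * Real.pi) ^ (-(1 : ℝ) / 2) * Real.exp (-(a c) ^ 2 / 2)) *
          ((1 / Λ) / (2 * Real.sqrt (c / Λ)) * (δL - δU)))) c :=
      hΦ'.const_sub (Phi (-z))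
    have hlog1 : HasDerivAt (fun x : ℝ => Real.log x) (1 / τ c) (τ c) := by
      simpa using (hasDerivAt_id (τ c)).log (ne_of_gt hτ0)
    have hlog2 : HasDerivAt (fun x : ℝ => Real.log (1 - x)) ((-1) / (1 - τ c)) (τ c) :=
      ((hasDerivAt_id (τ c)).const_sub 1).log (by simp only [id_eq]; intro h; linarith)
    have hlogit : HasDerivAt logit (1 / τ c - (-1) / (1 - τ c)) (τ c) := hlog1.sub hlog2
    exact (HasDerivAt.comp c hlogit hτ').deriv
  have hA : Tendsto (fun c => 1 / τ c - (-1) / (1 - τ c)) atTop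
      (nhds (1 / Phi (-z) - (-1) / (1 - Phi (-z)))) := by
    have h0 : Phi (-z) ≠ 0 := ne_of_gt (Phi_pos _)
    have h1 : (1 : ℝ) - Phi (-z) ≠ 0 := by have := Phi_lt_one (-z); intro h; linarith
    exact (tendsto_const_nhds.div part1 h0).sub
      (tendsto_const_nhds.div (tendsto_const_nhds.sub part1) h1)
  have hexp : Tendsto (fun c => Real.exp (-(a c) ^ 2 / 2)) atTop (nhds 0) := by
    have hsq2 : Tendsto (fun c => (a c) ^ 2) atTop atTop := by
      have habs : Tendsto (fun c => |a c|) atTop atTop := tendsto_abs_atBot_atTop.comp ha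
      have := (tendsto_pow_atTop (n := 2) (by norm_num)).comp habs
      refine this.congr fun c => ?_
      simp [Function.comp, sq_abs]
    have harg : Tendsto (fun c => -(a c) ^ 2 / 2) atTop atBot := by
      have := tendsto_neg_atTop_atBot.comp hsq2
      exact (this.atBot_div_const (by norm_num : (0:ℝ) < 2))
    exact Real.tendsto_exp_atBot.comp harg
  have hinv : Tendsto (fun c : ℝ => (1 / Λ) / (2 * Real.sqrt (c / Λ))) atTop (nhds 0) :=
    Tendsto.div_atTop tendsto_const_nhds (hs.const_mul_atTop (by norm_num : (0:ℝ) < 2))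
  have hB : Tendsto (fun c =>
      -(((2 * Real.pi) ^ (-(1 : ℝ) / 2) * Real.exp (-(a c) ^ 2 / 2)) *
        ((1 / Λ) / (2 * Real.sqrt (c / Λ)) * (δL - δU)))) atTop (nhds 0) := by
    have := (((tendsto_const_nhds (x := (2 * Real.pi) ^ (-(1:ℝ)/2)) (f := atTop)).mul hexp).mul (hinv.mul_const (δL - δU))).neg
    simpa using this
  have hD : Tendsto D atTop (nhds 0) := by
    simpa only [mul_zero] using hA.mul hB
  exact hD.congr' hev.symm
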